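/- arXiv:1612.07391 — 2 statements merged into one kernel-verified Lean document; each statement's English description precedes it below -/
import Mathlib

section
/- For every integer n ≥ 1, the polynomial Σ_{π ∈ S_n} x^{asc(π)+1} y^{desrlmin(π)} is symmetric in the variables x and y; equivalently, for all nonnegative integers a and b, the number of permutations π ∈ S_n with asc(π)+1 = a and desrlmin(π) = b equals the number with asc(π)+1 = b and desrlmin(π) = a. -/
open Finset

section Defs

variable {m : ℕ} {α : Type*}

def lrminFilter [LinearOrder α] (f : Fin m → α) : Finset (Fin m) :=
  univ.filter fun i => ∀ j, j < i → f i < f j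

def lrminCount [LinearOrder α] (f : Fin m → α) : ℕ :=
  (lrminFilter f).card

def lrminSet [LinearOrder α] [DecidableEq α] (f : Fin m → α) : Finset α :=
  (lrminFilter f).image f

def ascFilter [LinearOrder α] (f : Fin m → α) : Finset (Fin m) :=
  univ.filter fun i => ∃ j : Fin m, (j : ℕ) + 1 = (i : ℕ) ∧ f j < f i

def ascCount [LinearOrder α] (f : Fin m → α) : ℕ :=
  (ascFilter f).card

def ascSet [LinearOrder α] [DecidableEq α] (f : Fin m → α) : Finset α :=
  (ascFilter f).image f

def apFilter [LinearOrder α] (f : Fin m → α) : Finset (Fin m) :=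
  univ.filter fun i =>
    ∃ j k : Fin m, (j : ℕ) + 1 = (i : ℕ) ∧ (i : ℕ) + 1 = (k : ℕ) ∧ f j < f i ∧ f i = f k

def apCount [LinearOrder α] (f : Fin m → α) : ℕ := (apFilter f).card

def apSet [LinearOrder α] [DecidableEq α] (f : Fin m → α) : Finset α := (apFilter f).image f

def evenFilter [DecidableEq α] (f : Fin m → α) : Finset (Fin m) :=
  univ.filter fun p => (p : ℕ) % 2 = 1 ∧ ∀ q, q < p → f q ≠ f p

def evenCount [DecidableEq α] (f : Fin m → α) : ℕ := (evenFilter f).card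

def evenSet [DecidableEq α] (f : Fin m → α) : Finset α := (evenFilter f).image f

def desrlminCount [LinearOrder α] (f : Fin m → α) : ℕ :=
  (univ.filter fun i : Fin m =>
    (∃ j : Fin m, (j : ℕ) + 1 = (i : ℕ) ∧ f i < f j) ∨ ∀ j, i < j → f i < f j).card

def isLRminPos [LinearOrder α] (f : Fin m → α) (i : Fin m) : Prop :=
  ∀ j, j < i → f i < f j

instance [LinearOrder α] (f : Fin m → α) : DecidablePred (isLRminPos f) := fun i => by
  unfold isLRminPos; infer_instance

def bk2Count [LinearOrder α] (f : Fin m → α) : ℕ :=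
  (univ.filter fun i : Fin m =>
    isLRminPos f i ∧ (i : ℕ) + 1 < m ∧
      (∀ j : Fin m, (j : ℕ) = (i : ℕ) + 1 → ¬ isLRminPos f j) ∧
      (∀ j : Fin m, (j : ℕ) = (i : ℕ) + 2 → isLRminPos f j)).card

end Defs

def IsStirling (n : ℕ) (f : Fin (2 * n) → Fin n) : Prop :=
  (∀ k : Fin n, (univ.filter fun p => f p = k).card = 2) ∧
    ∀ p q r : Fin (2 * n), p < q → q < r → f p = f r → f p < f q

instance (n : ℕ) : DecidablePred (IsStirling n) := fun f => by
  unfold IsStirling; infer_instance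

def stirlingFinset (n : ℕ) : Finset (Fin (2 * n) → Fin n) :=
  univ.filter (IsStirling n)

def markedPerms (n : ℕ) : Finset (Equiv.Perm (Fin n) × Finset (Fin n)) :=
  univ.filter fun pm => ∀ v ∈ pm.2, v ∉ lrminSet (⇑pm.1)

/-!
The right-to-left minima of `π` cut the remaining positions into gaps: maximal runs of
non-minima, each closed on the right by a minimum. Call a step `i - 1 → i` internal if neither
end is a right-to-left minimum. Every right-to-left minimum except the last position starts an
ascent; every other ascent, and every descent ending at a non-minimum, is internal. Hence
`asc π + 1 = rlmin π + (internal ascents)` and `desrlmin π = rlmin π + (internal descents)`.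
Reversing every gap keeps the right-to-left minima (each entry of a gap exceeds the minimum
closing it) and swaps internal ascents with internal descents, so it is an involution of `S_n`
exchanging `asc + 1` and `desrlmin`.
-/

section Gaps

variable (B : Set ℕ)

def IsGap (a b : ℕ) : Prop :=
  (a = 0 ∨ a - 1 ∈ B) ∧ b ∈ B ∧ ∀ k, a ≤ k → k < b → k ∉ B

variable {B}

theorem IsGap.le_of_mem {a b k : ℕ} (h : IsGap B a b) (hak : a ≤ k) (hk : k ∈ B) : b ≤ k :=
  not_lt.1 fun hkb => h.2.2 k hak hkb hk

theorem IsGap.unique {a b a' b' i : ℕ} (h : IsGap B a b) (h' : IsGap B a' b')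
    (hi : a ≤ i ∧ i < b) (hi' : a' ≤ i ∧ i < b') : a = a' ∧ b = b' := by
  have start_le {a b a' b'} (h : IsGap B a b) (h' : IsGap B a' b')
      (hi : a ≤ i ∧ i < b) (hi' : a' ≤ i ∧ i < b') : a ≤ a' := by
    by_contra! hlt
    exact h'.2.2 (a - 1) (by omega) (by omega) (h.1.resolve_left (by omega))
  exact ⟨le_antisymm (start_le h h' hi hi') (start_le h' h hi' hi),
    le_antisymm (h.le_of_mem (by omega) h'.2.1) (h'.le_of_mem (by omega) h.2.1)⟩

theorem exists_isGap {i k : ℕ} (hi : i ∉ B) (hk : k ∈ B) (hik : i ≤ k) :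
    ∃ a b, IsGap B a b ∧ a ≤ i ∧ i < b := by
  classical
  have hend : ∃ b, i ≤ b ∧ b ∈ B := ⟨k, hik, hk⟩
  have hstart : ∃ a, ∀ l, a ≤ l → l ≤ i → l ∉ B := ⟨i, fun l h1 h2 => le_antisymm h2 h1 ▸ hi⟩
  obtain ⟨hib, hb⟩ := Nat.find_spec hend
  refine ⟨Nat.find hstart, Nat.find hend, ⟨?_, hb, fun l hal hlb => ?_⟩,
    Nat.find_min' hstart fun l h1 h2 => le_antisymm h2 h1 ▸ hi, lt_of_le_of_ne hib ?_⟩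
  · refine or_iff_not_imp_left.2 fun ha => ?_
    have hmin := Nat.find_min hstart (Nat.sub_one_lt ha)
    push Not at hmin
    obtain ⟨l, h1, h2, hl⟩ := hmin
    have hla : ¬Nat.find hstart ≤ l := fun h => Nat.find_spec hstart l h h2 hl
    exact (by omega : l = Nat.find hstart - 1) ▸ hl
  · rcases le_or_gt l i with hli | hil
    · exact Nat.find_spec hstart l hal hli
    · exact fun hl => Nat.find_min hend hlb ⟨hil.le, hl⟩
  · exact fun he => hi (he ▸ hb)

variable (B) in
open Classical in
/-- Reflects every gap `[a, b)` onto itself by `i ↦ a + b - 1 - i`; points in no gap are fixed. -/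
noncomputable def gapReflect (i : ℕ) : ℕ :=
  if h : ∃ p : ℕ × ℕ, IsGap B p.1 p.2 ∧ p.1 ≤ i ∧ i < p.2 then h.choose.1 + h.choose.2 - 1 - i
  else i

theorem IsGap.gapReflect_eq {a b i : ℕ} (h : IsGap B a b) (hai : a ≤ i) (hib : i < b) :
    gapReflect B i = a + b - 1 - i := by
  have hex : ∃ p : ℕ × ℕ, IsGap B p.1 p.2 ∧ p.1 ≤ i ∧ i < p.2 := ⟨(a, b), h, hai, hib⟩
  obtain ⟨hgap, hspec⟩ := hex.choose_spec
  obtain ⟨rfl, rfl⟩ := hgap.unique h hspec ⟨hai, hib⟩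
  rw [gapReflect, dif_pos hex]

theorem gapReflect_of_mem {i : ℕ} (hi : i ∈ B) : gapReflect B i = i := by
  refine dif_neg ?_
  rintro ⟨p, hp, hpi⟩
  exact hp.2.2 i hpi.1 hpi.2 hi

theorem gapReflect_lt {i k : ℕ} (hk : k ∈ B) (hik : i < k) : gapReflect B i < k := by
  by_cases hi : i ∈ B
  · rwa [gapReflect_of_mem hi]
  obtain ⟨a, b, h, hai, hib⟩ := exists_isGap hi hk hik.le
  have := h.le_of_mem (by omega) hk
  rw [h.gapReflect_eq hai hib]
  omega

theorem gapReflect_gapReflect {i k : ℕ} (hk : k ∈ B) (hik : i < k) :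
    gapReflect B (gapReflect B i) = i := by
  by_cases hi : i ∈ B
  · rw [gapReflect_of_mem hi, gapReflect_of_mem hi]
  obtain ⟨a, b, h, hai, hib⟩ := exists_isGap hi hk hik.le
  rw [h.gapReflect_eq hai hib, h.gapReflect_eq (by omega) (by omega)]
  omega

theorem lt_gapReflect {i j k : ℕ} (hi : i ∈ B) (hij : i < j) (hk : k ∈ B) (hjk : j < k) :
    i < gapReflect B j := by
  by_cases hj : j ∈ B
  · rwa [gapReflect_of_mem hj]
  obtain ⟨a, b, h, haj, hjb⟩ := exists_isGap hj hk hjk.le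
  have hia : i < a := not_le.1 fun hai => h.2.2 i hai (by omega) hi
  rw [h.gapReflect_eq haj hjb]
  omega

theorem gapReflect_succ_add_one {j k : ℕ} (hj : j ∉ B) (hj' : j + 1 ∉ B) (hk : k ∈ B)
    (hjk : j < k) : gapReflect B (j + 1) + 1 = gapReflect B j := by
  obtain ⟨a, b, h, haj, hjb⟩ := exists_isGap hj hk hjk.le
  have hjb' : j + 1 < b := lt_of_le_of_ne hjb fun he => hj' (he ▸ h.2.1)
  rw [h.gapReflect_eq haj hjb, h.gapReflect_eq (by omega) hjb']
  omega

end Gaps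

section ReflectGaps

variable {n : ℕ} (S : Finset (Fin n))

/-- Positions `k ≥ n` count as barriers too, so every position outside `S` lies in a gap. -/
def barrierSet : Set ℕ := {k | ∀ h : k < n, (⟨k, h⟩ : Fin n) ∈ S}

theorem mem_barrierSet_val {i : Fin n} : (i : ℕ) ∈ barrierSet S ↔ i ∈ S :=
  ⟨fun h => h i.isLt, fun h _ => h⟩

theorem length_mem_barrierSet : n ∈ barrierSet S := fun h => absurd h (lt_irrefl n)

noncomputable def reflectGaps (i : Fin n) : Fin n :=
  ⟨gapReflect (barrierSet S) i, gapReflect_lt (length_mem_barrierSet S) i.isLt⟩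

theorem reflectGaps_involutive : Function.Involutive (reflectGaps S) := fun i =>
  Fin.ext (gapReflect_gapReflect (length_mem_barrierSet S) i.isLt)

variable {S}

theorem reflectGaps_of_mem {i : Fin n} (hi : i ∈ S) : reflectGaps S i = i :=
  Fin.ext (gapReflect_of_mem ((mem_barrierSet_val S).2 hi))

theorem reflectGaps_mem_iff {i : Fin n} : reflectGaps S i ∈ S ↔ i ∈ S := by
  refine ⟨fun h => ?_, fun h => (reflectGaps_of_mem h).symm ▸ h⟩
  rwa [← reflectGaps_involutive S i, reflectGaps_of_mem h]

theorem lt_reflectGaps {i j : Fin n} (hi : i ∈ S) (hij : i < j) : i < reflectGaps S j :=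
  lt_gapReflect ((mem_barrierSet_val S).2 hi) hij (length_mem_barrierSet S) j.isLt

theorem reflectGaps_add_one {i j : Fin n} (hji : (j : ℕ) + 1 = i) (hj : j ∉ S) (hi : i ∉ S) :
    (reflectGaps S i : ℕ) + 1 = reflectGaps S j := by
  have hj' : (j : ℕ) + 1 ∉ barrierSet S := hji ▸ (mem_barrierSet_val S).not.2 hi
  have := gapReflect_succ_add_one ((mem_barrierSet_val S).not.2 hj) hj'
    (length_mem_barrierSet S) j.isLt
  rwa [hji] at this

end ReflectGaps

section GapSteps

variable {n : ℕ} {α : Type*}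

def gapSteps (S : Finset (Fin n)) (r : α → α → Prop) [DecidableRel r] (f : Fin n → α) :
    Finset (Fin n) :=
  univ.filter fun i => ∃ j : Fin n, (j : ℕ) + 1 = i ∧ j ∉ S ∧ i ∉ S ∧ r (f j) (f i)

noncomputable def reflectGapStep (S : Finset (Fin n)) (i : Fin n) : Fin n :=
  reflectGaps S ⟨i - 1, by omega⟩

variable {S : Finset (Fin n)} {r : α → α → Prop} [DecidableRel r] {f : Fin n → α} {i : Fin n}

theorem reflectGapStep_mem_gapSteps (hi : i ∈ gapSteps S r f) :
    reflectGapStep S i ∈ gapSteps S (fun a b => r b a) (f ∘ reflectGaps S) := by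
  obtain ⟨j, hji, hj, hi, hr⟩ := (mem_filter.1 hi).2
  have hpred : (⟨i - 1, by omega⟩ : Fin n) = j := Fin.ext (by simp only; omega)
  refine mem_filter.2 ⟨mem_univ _, reflectGaps S i, ?_⟩
  rw [reflectGapStep, hpred]
  refine ⟨reflectGaps_add_one hji hj hi, reflectGaps_mem_iff.not.2 hi,
    reflectGaps_mem_iff.not.2 hj, ?_⟩
  simpa only [Function.comp_apply, reflectGaps_involutive S _] using hr

theorem reflectGapStep_reflectGapStep (hi : i ∈ gapSteps S r f) :
    reflectGapStep S (reflectGapStep S i) = i := by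
  obtain ⟨j, hji, hj, hi, -⟩ := (mem_filter.1 hi).2
  have hpred : (⟨i - 1, by omega⟩ : Fin n) = j := Fin.ext (by simp only; omega)
  have hstep := reflectGaps_add_one hji hj hi
  have hpred' : (⟨reflectGaps S j - 1, by omega⟩ : Fin n) = reflectGaps S i :=
    Fin.ext (by simp only; omega)
  have hfirst : reflectGapStep S i = reflectGaps S j := by rw [reflectGapStep, hpred]
  rw [hfirst, reflectGapStep, hpred', reflectGaps_involutive S i]

theorem card_gapSteps_comp_reflectGaps :
    #(gapSteps S r (f ∘ reflectGaps S)) = #(gapSteps S (fun a b => r b a) f) := by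
  refine card_nbij' (reflectGapStep S) (reflectGapStep S) (fun i hi => ?_)
    (fun i hi => reflectGapStep_mem_gapSteps hi) (fun i hi => reflectGapStep_reflectGapStep hi)
    (fun i hi => reflectGapStep_reflectGapStep hi)
  have := reflectGapStep_mem_gapSteps hi
  rwa [Function.comp_assoc, (reflectGaps_involutive S).comp_self, Function.comp_id] at this

end GapSteps

section RLMin

open Function

variable {n : ℕ} {α : Type*} [LinearOrder α]

def rlminFilter (f : Fin n → α) : Finset (Fin n) :=
  univ.filter fun i => ∀ j, i < j → f i < f j

variable {f : Fin n → α}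

theorem mem_rlminFilter {i : Fin n} : i ∈ rlminFilter f ↔ ∀ j, i < j → f i < f j := by
  simp [rlminFilter]

theorem exists_mem_rlminFilter_of_not_mem (hf : Injective f) {k : Fin n}
    (hk : k ∉ rlminFilter f) : ∃ m ∈ rlminFilter f, k < m ∧ f m < f k := by
  simp only [mem_rlminFilter, not_forall, not_lt] at hk
  obtain ⟨j, hkj, hjk⟩ := hk
  obtain ⟨m, hm, hmin⟩ := exists_min_image (Ioi k) f ⟨j, mem_Ioi.2 hkj⟩
  have hkm := mem_Ioi.1 hm
  refine ⟨m, mem_rlminFilter.2 fun l hml => ?_, hkm, ?_⟩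
  · exact lt_of_le_of_ne (hmin l (mem_Ioi.2 (hkm.trans hml))) (hf.ne hml.ne)
  · exact lt_of_le_of_ne ((hmin j (mem_Ioi.2 hkj)).trans hjk) (hf.ne hkm.ne')

theorem pred_length_mem_barrierSet (f : Fin n → α) : n - 1 ∈ barrierSet (rlminFilter f) :=
  fun _ => mem_rlminFilter.2 fun j hj => absurd hj (by simp only [Fin.lt_def]; omega)

theorem lt_of_isGap (hf : Injective f) {a b : ℕ} (h : IsGap (barrierSet (rlminFilter f)) a b)
    {k : Fin n} (hak : a ≤ k) (hkb : k < b) (hb : b < n) : f ⟨b, hb⟩ < f k := by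
  have hk : k ∉ rlminFilter f := (mem_barrierSet_val _).not.1 (h.2.2 k hak hkb)
  obtain ⟨m, hm, hkm, hmk⟩ := exists_mem_rlminFilter_of_not_mem hf hk
  have hbm : b ≤ m := h.le_of_mem (hak.trans (Fin.lt_def.1 hkm).le) ((mem_barrierSet_val _).2 hm)
  rcases hbm.lt_or_eq with hbm | hbm
  · exact (mem_rlminFilter.1 (h.2.1 hb) m hbm).trans hmk
  · exact (Fin.ext hbm : (⟨b, hb⟩ : Fin n) = m) ▸ hmk

theorem rlminFilter_comp_reflectGaps (hf : Injective f) :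
    rlminFilter (f ∘ reflectGaps (rlminFilter f)) = rlminFilter f := by
  ext i
  simp only [mem_rlminFilter, comp_apply]
  refine ⟨fun hi => ?_, fun hi j hij => ?_⟩
  · by_contra hnot
    have hnot' := (mem_barrierSet_val (rlminFilter f)).not.2 (mt mem_rlminFilter.1 hnot)
    obtain ⟨a, b, h, hai, hib⟩ :=
      exists_isGap hnot' (pred_length_mem_barrierSet f) (by omega : (i : ℕ) ≤ n - 1)
    have hb : b < n := by have := h.le_of_mem (by omega) (pred_length_mem_barrierSet f); omega
    have hgap := h.gapReflect_eq hai hib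
    have hclose := lt_of_isGap hf h (k := reflectGaps (rlminFilter f) i)
      (by simp only [reflectGaps]; omega) (by simp only [reflectGaps]; omega) hb
    have := hi ⟨b, hb⟩ hib
    rw [reflectGaps_of_mem (h.2.1 hb)] at this
    exact lt_asymm this hclose
  · rw [reflectGaps_of_mem (mem_rlminFilter.2 hi)]
    exact hi _ (lt_reflectGaps (mem_rlminFilter.2 hi) hij)

end RLMin

section Counting

variable {n : ℕ} {α : Type*} [LinearOrder α]

theorem card_filter_exists_succ_add_one {S : Finset (Fin n)} (hn : 0 < n)
    (hS : (⟨n - 1, by omega⟩ : Fin n) ∈ S) :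
    #(univ.filter fun i : Fin n => ∃ j ∈ S, (j : ℕ) + 1 = i) + 1 = #S := by
  rw [← card_erase_add_one hS]
  congr 1
  refine card_nbij (fun i => ⟨i - 1, by omega⟩) (fun i hi => ?_) (fun i hi i' hi' he => ?_)
    (fun j hj => ?_)
  · obtain ⟨j, hj, hji⟩ := (mem_filter.1 hi).2
    have hpred : (⟨i - 1, by omega⟩ : Fin n) = j := Fin.ext (by simp only; omega)
    simp only [mem_coe]
    rw [hpred]
    exact mem_erase.2 ⟨fun h => by have := congrArg Fin.val h; simp only at this; omega, hj⟩
  · obtain ⟨j, -, hji⟩ := (mem_filter.1 hi).2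
    obtain ⟨j', -, hji'⟩ := (mem_filter.1 hi').2
    have := congrArg Fin.val he
    simp only at this
    exact Fin.ext (by omega)
  · obtain ⟨hjlast, hj⟩ := mem_erase.1 hj
    have hjn : (j : ℕ) + 1 < n := by
      have : (j : ℕ) ≠ n - 1 := fun h => hjlast (Fin.ext h)
      omega
    exact ⟨⟨j + 1, hjn⟩, mem_filter.2 ⟨mem_univ _, j, hj, rfl⟩, Fin.ext (by simp)⟩

theorem ascCount_add_one (hn : 0 < n) (f : Fin n → α) :
    ascCount f + 1 = #(rlminFilter f) + #(gapSteps (rlminFilter f) (· < ·) f) := by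
  set R := rlminFilter f
  have hsplit : ascFilter f =
      gapSteps R (· < ·) f ∪ univ.filter fun i : Fin n => ∃ j ∈ R, (j : ℕ) + 1 = i := by
    ext i
    simp only [ascFilter, gapSteps, mem_filter, mem_univ, true_and, mem_union]
    refine ⟨fun ⟨j, hji, hlt⟩ => ?_, ?_⟩
    · by_cases hj : j ∈ R
      · exact Or.inr ⟨j, hj, hji⟩
      refine Or.inl ⟨j, hji, hj, fun hi => hj (mem_rlminFilter.2 fun k hjk => ?_), hlt⟩
      by_cases hki : k = i
      · exact hki ▸ hlt
      have := Fin.val_ne_iff.2 hki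
      exact hlt.trans (mem_rlminFilter.1 hi k (Fin.lt_def.2 (by omega)))
    · rintro (⟨j, hji, -, -, hlt⟩ | ⟨j, hj, hji⟩)
      · exact ⟨j, hji, hlt⟩
      · exact ⟨j, hji, mem_rlminFilter.1 hj i (Fin.lt_def.2 (by omega))⟩
  have hdisj : Disjoint (gapSteps R (· < ·) f)
      (univ.filter fun i : Fin n => ∃ j ∈ R, (j : ℕ) + 1 = i) := by
    refine disjoint_left.2 fun i hi hi' => ?_
    obtain ⟨j, hji, hj, -⟩ := (mem_filter.1 hi).2
    obtain ⟨j', hj', hji'⟩ := (mem_filter.1 hi').2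
    exact hj ((Fin.ext (by omega) : j' = j) ▸ hj')
  have hshift : _ + 1 = #R :=
    card_filter_exists_succ_add_one hn (pred_length_mem_barrierSet f (by omega))
  rw [ascCount, hsplit, card_union_of_disjoint hdisj]
  omega

theorem desrlminCount_eq (f : Fin n → α) :
    desrlminCount f = #(rlminFilter f) + #(gapSteps (rlminFilter f) (fun a b => b < a) f) := by
  rw [desrlminCount, ← card_union_of_disjoint]
  · congr 1
    ext i
    simp only [mem_filter, mem_univ, true_and, mem_union, gapSteps, ← mem_rlminFilter]
    by_cases hi : i ∈ rlminFilter f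
    · simp [hi]
    simp only [hi, or_false, false_or, not_false_eq_true, true_and]
    refine exists_congr fun j => ⟨fun ⟨hji, hlt⟩ => ⟨hji, fun hj => ?_, hlt⟩,
      fun ⟨hji, _, hlt⟩ => ⟨hji, hlt⟩⟩
    exact lt_asymm hlt (mem_rlminFilter.1 hj i (Fin.lt_def.2 (by omega)))
  · refine disjoint_left.2 fun i hi hi' => ?_
    obtain ⟨-, -, -, hi'', -⟩ := (mem_filter.1 hi').2
    exact hi'' hi

end Counting

section Involution

variable {n : ℕ}

noncomputable def reverseRLminGaps (π : Equiv.Perm (Fin n)) : Equiv.Perm (Fin n) :=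
  π * (reflectGaps_involutive (rlminFilter ⇑π)).toPerm

theorem coe_reverseRLminGaps (π : Equiv.Perm (Fin n)) :
    ⇑(reverseRLminGaps π) = ⇑π ∘ reflectGaps (rlminFilter ⇑π) := rfl

theorem rlminFilter_reverseRLminGaps (π : Equiv.Perm (Fin n)) :
    rlminFilter ⇑(reverseRLminGaps π) = rlminFilter ⇑π :=
  rlminFilter_comp_reflectGaps π.injective

theorem reverseRLminGaps_involutive : Function.Involutive (reverseRLminGaps (n := n)) := by
  intro π
  ext i
  rw [coe_reverseRLminGaps, rlminFilter_reverseRLminGaps, coe_reverseRLminGaps]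
  simp only [Function.comp_apply, reflectGaps_involutive _ i]

theorem ascCount_reverseRLminGaps_add_one (hn : 0 < n) (π : Equiv.Perm (Fin n)) :
    ascCount ⇑(reverseRLminGaps π) + 1 = desrlminCount ⇑π := by
  rw [ascCount_add_one hn, rlminFilter_reverseRLminGaps, coe_reverseRLminGaps,
    card_gapSteps_comp_reflectGaps, desrlminCount_eq]

theorem desrlminCount_reverseRLminGaps (hn : 0 < n) (π : Equiv.Perm (Fin n)) :
    desrlminCount ⇑(reverseRLminGaps π) = ascCount ⇑π + 1 := by
  simpa only [reverseRLminGaps_involutive π] using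
    (ascCount_reverseRLminGaps_add_one hn (reverseRLminGaps π)).symm

end Involution

/-- symmetry of Σ_{π ∈ S_n} x^{asc(π)+1} y^{desrlmin(π)} in x and y
(variables: X 0 = x, X 1 = y), together with the equivalent counting formulation. -/
theorem stmt_14 (n : ℕ) (hn : 1 ≤ n) :
    (∑ π : Equiv.Perm (Fin n),
          (MvPolynomial.X 0 : MvPolynomial (Fin 2) ℤ) ^ (ascCount ⇑π + 1) *
            MvPolynomial.X 1 ^ desrlminCount ⇑π
        = ∑ π : Equiv.Perm (Fin n),
            (MvPolynomial.X 1 : MvPolynomial (Fin 2) ℤ) ^ (ascCount ⇑π + 1) *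
              MvPolynomial.X 0 ^ desrlminCount ⇑π) ∧
      ∀ a b : ℕ,
        (univ.filter fun π : Equiv.Perm (Fin n) =>
            ascCount ⇑π + 1 = a ∧ desrlminCount ⇑π = b).card
          = (univ.filter fun π : Equiv.Perm (Fin n) =>
              ascCount ⇑π + 1 = b ∧ desrlminCount ⇑π = a).card := by
  let φ := (reverseRLminGaps_involutive (n := n)).toPerm
  have hasc (π) : ascCount ⇑(φ π) + 1 = desrlminCount ⇑π :=
    ascCount_reverseRLminGaps_add_one hn π
  have hdes (π) : desrlminCount ⇑(φ π) = ascCount ⇑π + 1 :=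
    desrlminCount_reverseRLminGaps hn π
  refine ⟨Fintype.sum_equiv φ _ _ fun π => ?_, fun a b => card_equiv φ fun π => ?_⟩
  · rw [hasc, hdes, mul_comm]
  · simp only [mem_filter, mem_univ, true_and, hasc, hdes, and_comm]
end

section
/- For every integer n ≥ 1 and every positive integer q, the following identity holds in ℤ[x]: Σ_{π ∈ S_n} q^{lrmin(π)} x^{asc(π)} = Σ over all q-tuples (n₁,…,n_q) of nonnegative integers with n₁+⋯+n_q = n of the multinomial coefficient n!/(n₁!⋯n_q!) times the product A_{n₁}(x)⋯A_{n_q}(x), where A_m(x) = Σ_{π ∈ S_m} x^{asc(π)} is the m-th Eulerian polynomial and A_0(x) = 1. -/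
open Finset

/-- The m-th Eulerian polynomial A_m(x) = Σ_{π ∈ S_m} x^{asc(π)} (with A_0 = 1). -/
noncomputable def eulerianPoly (m : ℕ) : Polynomial ℤ :=
  ∑ π : Equiv.Perm (Fin m), Polynomial.X ^ ascCount ⇑π

open Polynomial

/-!
Both sides, as functions of `n`, start at `1` and satisfy
`P (n + 1) = q P n + X (1 - X) P' n + n X P n` (`eulerStep q n`).
On the left, every permutation of `n + 1` letters is obtained exactly once by inserting the
largest letter into a permutation `σ` of `n` letters: in front it creates one left-to-right minimum
and no ascent, inside one of the `asc σ` ascents it changes nothing, and in the remaining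
`n - asc σ` places it adds one ascent. On the right, Pascal's rule for multinomial coefficients
reduces the step to the case `q = 1` (the Eulerian recurrence) in a single factor, and since
`X (1 - X) d/dX` is a derivation the factors reassemble.
-/

section EulerStep

variable {R : Type*} [CommRing R]

noncomputable def eulerStep (c n : ℕ) (P : R[X]) : R[X] :=
  (c : R[X]) * P + X * (1 - X) * derivative P + (n : R[X]) * X * P

lemma eulerStep_sum {ι : Type*} (c n : ℕ) (s : Finset ι) (P : ι → R[X]) :
    eulerStep c n (∑ i ∈ s, P i) = ∑ i ∈ s, eulerStep c n (P i) := by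
  simp only [eulerStep, derivative_sum, mul_sum, sum_add_distrib]

lemma eulerStep_natCast_mul (c n k : ℕ) (P : R[X]) :
    eulerStep c n ((k : R[X]) * P) = k * eulerStep c n P := by
  simp only [eulerStep, derivative_natCast_mul]
  ring

lemma eulerStep_X_pow (c n a : ℕ) :
    eulerStep c n (X ^ a : R[X])
      = ((c : R[X]) + (a : R[X])) * X ^ a + ((n : R[X]) - (a : R[X])) * X ^ (a + 1) := by
  rcases a with _ | a
  · simp [eulerStep]
  · simp only [eulerStep, derivative_X_pow, C_eq_natCast, Nat.add_sub_cancel]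
    push_cast
    ring

lemma sum_eulerStep_mul_prod_erase {ι : Type*} [DecidableEq ι] (s : Finset ι) (w : ι → ℕ)
    (P : ι → R[X]) :
    ∑ j ∈ s, eulerStep 1 (w j) (P j) * ∏ i ∈ s.erase j, P i
      = eulerStep #s (∑ j ∈ s, w j) (∏ i ∈ s, P i) := by
  have hterm : ∀ j ∈ s, eulerStep 1 (w j) (P j) * ∏ i ∈ s.erase j, P i
      = ∏ i ∈ s, P i + X * (1 - X) * ((∏ i ∈ s.erase j, P i) * derivative (P j))
        + (w j : R[X]) * X * ∏ i ∈ s, P i := by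
    intro j hj
    rw [← mul_prod_erase s P hj, eulerStep, Nat.cast_one]
    ring
  rw [sum_congr rfl hterm, sum_add_distrib, sum_add_distrib, sum_const, ← mul_sum, ← sum_mul,
    ← sum_mul, eulerStep, derivative_prod_finset, nsmul_eq_mul, Nat.cast_sum]

end EulerStep

section Insertion

variable {α : Type*} [LinearOrder α] {n : ℕ}

lemma lrminFilter_comp_of_strictMono {β : Type*} [LinearOrder β] {g : α → β}
    (hg : StrictMono g) (f : Fin n → α) : lrminFilter (g ∘ f) = lrminFilter f := by
  simp [lrminFilter, hg.lt_iff_lt]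

lemma ascFilter_comp_of_strictMono {β : Type*} [LinearOrder β] {g : α → β}
    (hg : StrictMono g) (f : Fin n → α) : ascFilter (g ∘ f) = ascFilter f := by
  simp [ascFilter, hg.lt_iff_lt]

lemma card_eq_ite_add_card_filter_succAbove (p : Fin (n + 1)) (s : Finset (Fin (n + 1))) :
    #s = (if p ∈ s then 1 else 0) + #{i : Fin n | p.succAbove i ∈ s} := by
  conv_lhs => rw [← filter_univ_mem s]
  rw [card_filter, card_filter, Fin.sum_univ_succAbove _ p]

lemma val_succAbove (p : Fin (n + 1)) (i : Fin n) :
    (p.succAbove i : ℕ) = if (i : ℕ) < p then (i : ℕ) else (i : ℕ) + 1 := by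
  rcases lt_or_ge i.castSucc p with h | h
  · simp [Fin.succAbove_of_castSucc_lt _ _ h, show (i : ℕ) < p from h]
  · simp [Fin.succAbove_of_le_castSucc _ _ h, show ¬ (i : ℕ) < p from not_lt.2 h]

variable {f : Fin n → α} {M : α}

lemma self_mem_lrminFilter_insertNth_iff (hM : ∀ i, f i < M) (p : Fin (n + 1)) :
    p ∈ lrminFilter (p.insertNth M f) ↔ p = 0 := by
  simp only [lrminFilter, mem_filter, mem_univ, true_and, Fin.insertNth_apply_same]
  refine ⟨fun h => ?_, fun h j hj => absurd hj (h ▸ Fin.not_lt_zero j)⟩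
  by_contra hp
  obtain ⟨i, hi⟩ := Fin.exists_succAbove_eq (Ne.symm hp)
  have hlt := h 0 (Fin.pos_of_ne_zero hp)
  rw [← hi, Fin.insertNth_apply_succAbove] at hlt
  exact (hM i).not_gt hlt

lemma succAbove_mem_lrminFilter_insertNth_iff (hM : ∀ i, f i < M) (p : Fin (n + 1)) (i : Fin n) :
    p.succAbove i ∈ lrminFilter (p.insertNth M f) ↔ i ∈ lrminFilter f := by
  simp only [lrminFilter, mem_filter, mem_univ, true_and, Fin.insertNth_apply_succAbove]
  constructor
  · intro h j hj
    simpa using h (p.succAbove j) (Fin.strictMono_succAbove p hj)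
  · intro h j hj
    rcases eq_or_ne j p with rfl | hne
    · simpa using hM i
    · obtain ⟨j, rfl⟩ := Fin.exists_succAbove_eq hne
      simpa using h j (Fin.succAbove_lt_succAbove_iff.1 hj)

lemma lrminCount_insertNth (hM : ∀ i, f i < M) (p : Fin (n + 1)) :
    lrminCount (p.insertNth M f) = (if p = 0 then 1 else 0) + lrminCount f := by
  simp only [lrminCount, card_eq_ite_add_card_filter_succAbove p (lrminFilter _),
    self_mem_lrminFilter_insertNth_iff hM, succAbove_mem_lrminFilter_insertNth_iff hM,
    filter_univ_mem]

lemma self_mem_ascFilter_insertNth_iff (hM : ∀ i, f i < M) (p : Fin (n + 1)) :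
    p ∈ ascFilter (p.insertNth M f) ↔ p ≠ 0 := by
  simp only [ascFilter, mem_filter, mem_univ, true_and, Fin.insertNth_apply_same]
  constructor
  · rintro ⟨j, hj, -⟩ rfl
    simp at hj
  · intro hp
    obtain ⟨k, rfl⟩ := Fin.exists_succ_eq_of_ne_zero hp
    refine ⟨k.castSucc, by simp, ?_⟩
    rw [← Fin.succAbove_succ_self, Fin.insertNth_apply_succAbove]
    exact hM k

lemma succAbove_mem_ascFilter_insertNth_iff (hM : ∀ i, f i < M) (p : Fin (n + 1)) (i : Fin n) :
    p.succAbove i ∈ ascFilter (p.insertNth M f) ↔ i ∈ ascFilter f ∧ (i : ℕ) ≠ p := by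
  simp only [ascFilter, mem_filter, mem_univ, true_and, Fin.insertNth_apply_succAbove]
  constructor
  · rintro ⟨j, hj, hlt⟩
    have hjp : j ≠ p := by
      rintro rfl
      rw [Fin.insertNth_apply_same] at hlt
      exact (hM i).not_gt hlt
    obtain ⟨j, rfl⟩ := Fin.exists_succAbove_eq hjp
    rw [Fin.insertNth_apply_succAbove] at hlt
    rw [val_succAbove, val_succAbove] at hj
    refine ⟨⟨j, ?_, hlt⟩, ?_⟩ <;> split_ifs at hj <;> omega
  · rintro ⟨⟨j, hj, hlt⟩, hip⟩
    refine ⟨p.succAbove j, ?_, by simpa⟩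
    rw [val_succAbove, val_succAbove]
    split_ifs <;> omega

lemma ascCount_insertNth (hM : ∀ i, f i < M) (p : Fin (n + 1)) :
    ascCount (p.insertNth M f)
      = (if p = 0 then 0 else 1) + #((ascFilter f).filter fun i : Fin n => (i : ℕ) ≠ p) := by
  simp only [ascCount, card_eq_ite_add_card_filter_succAbove p (ascFilter _),
    self_mem_ascFilter_insertNth_iff hM, succAbove_mem_ascFilter_insertNth_iff hM, ite_not,
    ← filter_filter, filter_univ_mem]

end Insertion

lemma val_ne_zero_of_mem_ascFilter {α : Type*} [LinearOrder α] {m : ℕ} {f : Fin m → α}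
    {i : Fin m} (h : i ∈ ascFilter f) : (i : ℕ) ≠ 0 := by
  obtain ⟨j, hj, -⟩ := (mem_filter.1 h).2
  omega

section InsertMax

variable {n : ℕ}

/-- Insert the new largest value `n` at position `p` of the word of `σ`. -/
def insertMax (σ : Equiv.Perm (Fin n)) (p : Fin (n + 1)) : Equiv.Perm (Fin (n + 1)) :=
  (finSuccEquiv' p).trans (σ.optionCongr.trans (finSuccEquiv' (Fin.last n)).symm)

lemma coe_insertMax (σ : Equiv.Perm (Fin n)) (p : Fin (n + 1)) :
    ⇑(insertMax σ p) = p.insertNth (Fin.last n) (Fin.castSucc ∘ σ) := by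
  funext i
  induction i using p.succAboveCases with
  | x => simp [insertMax, finSuccEquiv'_at, finSuccEquiv'_symm_none]
  | p i => simp [insertMax, finSuccEquiv'_succAbove, finSuccEquiv'_symm_some, Fin.succAbove_last]

lemma insertMax_bijective :
    Function.Bijective fun σp : Equiv.Perm (Fin n) × Fin (n + 1) => insertMax σp.1 σp.2 := by
  refine (Fintype.bijective_iff_injective_and_card _).2
    ⟨?_, by simp [Fintype.card_perm, Nat.factorial_succ, mul_comm]⟩
  rintro ⟨σ, p⟩ ⟨τ, r⟩ h
  have hp : insertMax σ p p = Fin.last n := by simp [coe_insertMax]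
  have hr : insertMax σ p r = Fin.last n := by simp [h, coe_insertMax]
  obtain rfl : p = r := (insertMax σ p).injective (hp.trans hr.symm)
  have hστ : σ = τ := Equiv.ext fun i => by
    simpa [coe_insertMax] using congrFun (congrArg DFunLike.coe h) (p.succAbove i)
  rw [hστ]

lemma lrminCount_insertMax (σ : Equiv.Perm (Fin n)) (p : Fin (n + 1)) :
    lrminCount ⇑(insertMax σ p) = (if p = 0 then 1 else 0) + lrminCount ⇑σ := by
  rw [coe_insertMax,
    lrminCount_insertNth (f := Fin.castSucc ∘ σ) (fun i => Fin.castSucc_lt_last _), lrminCount,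
    lrminCount, lrminFilter_comp_of_strictMono Fin.strictMono_castSucc]

/-- `p ∈ insert 0 …`: the new letter goes in front, or inside an ascent whose top is at `p`. -/
lemma ascCount_insertMax (σ : Equiv.Perm (Fin n)) (p : Fin (n + 1)) :
    ascCount ⇑(insertMax σ p)
      = ascCount ⇑σ + if p ∈ insert 0 ((ascFilter ⇑σ).map Fin.castSuccEmb) then 0 else 1 := by
  rw [coe_insertMax,
    ascCount_insertNth (f := Fin.castSucc ∘ σ) (fun i => Fin.castSucc_lt_last _),
    ascFilter_comp_of_strictMono Fin.strictMono_castSucc, ascCount]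
  set A := ascFilter ⇑σ
  by_cases hp0 : p = 0
  · subst hp0
    have hfilter : A.filter (fun j : Fin n => (j : ℕ) ≠ ((0 : Fin (n + 1)) : ℕ)) = A :=
      filter_true_of_mem fun i hi => by simpa using val_ne_zero_of_mem_ascFilter hi
    rw [hfilter, if_pos rfl, if_pos (mem_insert_self _ _), zero_add, add_zero]
  by_cases hpA : p ∈ A.map Fin.castSuccEmb
  · obtain ⟨i, hi, rfl⟩ := mem_map.1 hpA
    have hfilter :
        A.filter (fun j : Fin n => (j : ℕ) ≠ (Fin.castSuccEmb i : ℕ)) = A.erase i := by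
      rw [← filter_ne']
      simp [Fin.val_inj]
    have hA : 0 < #A := card_pos.2 ⟨i, hi⟩
    rw [hfilter, card_erase_of_mem hi, if_neg hp0, if_pos (mem_insert_of_mem hpA)]
    omega
  · have hfilter : A.filter (fun j : Fin n => (j : ℕ) ≠ p) = A :=
      filter_true_of_mem fun i hi hip => hpA (mem_map.2 ⟨i, hi, Fin.ext hip⟩)
    rw [hfilter, if_neg hp0, if_neg (by simp [hp0, hpA]), add_comm]

end InsertMax

lemma sum_insertMax {n : ℕ} (c : ℕ) (σ : Equiv.Perm (Fin n)) :
    ∑ p, (c : ℤ[X]) ^ lrminCount ⇑(insertMax σ p) * X ^ ascCount ⇑(insertMax σ p)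
      = eulerStep c n ((c : ℤ[X]) ^ lrminCount ⇑σ * X ^ ascCount ⇑σ) := by
  set S := insert 0 ((ascFilter ⇑σ).map Fin.castSuccEmb)
  have h0 : (0 : Fin (n + 1)) ∉ (ascFilter ⇑σ).map Fin.castSuccEmb := by
    simp only [mem_map, not_exists, not_and]
    intro i hi h
    exact val_ne_zero_of_mem_ascFilter hi (congrArg Fin.val h)
  have hS : #S = ascCount ⇑σ + 1 := by rw [card_insert_of_notMem h0, card_map]; rfl
  have hterm : ∀ p, (c : ℤ[X]) ^ lrminCount ⇑(insertMax σ p) * X ^ ascCount ⇑(insertMax σ p)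
      = (c : ℤ[X]) ^ lrminCount ⇑σ
        * if p ∈ S then (if p = 0 then (c : ℤ[X]) else 1) * X ^ ascCount ⇑σ
          else X ^ (ascCount ⇑σ + 1) := by
    intro p
    rw [lrminCount_insertMax, ascCount_insertMax]
    by_cases hpS : p ∈ S
    · rw [if_pos hpS, if_pos hpS, add_zero]
      split_ifs <;> ring
    · have hp : p ≠ 0 := fun hp => hpS (hp ▸ mem_insert_self _ _)
      rw [if_neg hpS, if_neg hpS, if_neg hp]
      ring
  have hinS : ∑ p ∈ S, (if p = 0 then (c : ℤ[X]) else 1) = c + ascCount ⇑σ := by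
    rw [sum_insert h0, if_pos rfl, sum_map,
      sum_congr rfl fun i hi => if_neg fun h : Fin.castSuccEmb i = 0 => h0 (h ▸ mem_map_of_mem _ hi),
      sum_const, nsmul_one]
    rfl
  rw [sum_congr rfl fun p _ => hterm p, ← mul_sum, ← Nat.cast_pow, eulerStep_natCast_mul,
    eulerStep_X_pow, ← sum_add_sum_compl S]
  congr 1
  rw [sum_congr rfl fun p hp => if_pos hp, sum_congr rfl fun p hp => if_neg (mem_compl.1 hp),
    ← sum_mul, hinS, sum_const, card_compl, Fintype.card_fin, hS, nsmul_eq_mul,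
    Nat.cast_sub (hS ▸ (card_le_univ S).trans_eq (Fintype.card_fin _))]
  push_cast
  ring

noncomputable def lrminAscPoly (c n : ℕ) : ℤ[X] :=
  ∑ π : Equiv.Perm (Fin n), (c : ℤ[X]) ^ lrminCount ⇑π * X ^ ascCount ⇑π

lemma lrminAscPoly_zero (c : ℕ) : lrminAscPoly c 0 = 1 := by
  simp [lrminAscPoly, lrminCount, ascCount, lrminFilter, ascFilter]

lemma lrminAscPoly_succ (c n : ℕ) :
    lrminAscPoly c (n + 1) = eulerStep c n (lrminAscPoly c n) := by
  rw [lrminAscPoly, ← Fintype.sum_bijective _ insertMax_bijective _ _ fun _ => rfl,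
    Fintype.sum_prod_type, lrminAscPoly, eulerStep_sum]
  exact sum_congr rfl fun σ _ => sum_insertMax c σ

lemma eulerianPoly_eq_lrminAscPoly_one (m : ℕ) : eulerianPoly m = lrminAscPoly 1 m := by
  simp [eulerianPoly, lrminAscPoly]

lemma eulerianPoly_zero : eulerianPoly 0 = 1 := by
  rw [eulerianPoly_eq_lrminAscPoly_one, lrminAscPoly_zero]

lemma eulerianPoly_succ (m : ℕ) : eulerianPoly (m + 1) = eulerStep 1 m (eulerianPoly m) := by
  simp only [eulerianPoly_eq_lrminAscPoly_one, lrminAscPoly_succ]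

section Multinomial

open scoped Nat

variable {ι : Type*} [Fintype ι] [DecidableEq ι]

lemma sum_update_add_apply {M : Type*} [AddCommMonoid M] (f : ι → M) (j : ι) (b : M) :
    ∑ i, Function.update f j b i + f j = ∑ i, f i + b := by
  rw [sum_update_of_mem (mem_univ j), sdiff_singleton_eq_erase,
    ← add_sum_erase univ f (mem_univ j)]
  abel

lemma prod_factorial_eq_mul_prod_factorial_update {v : ι → ℕ} {j : ι} (hj : v j ≠ 0) :
    ∏ i, (v i)! = v j * ∏ i, (Function.update v j (v j - 1) i)! := by
  rw [← mul_prod_erase univ _ (mem_univ j), ← mul_prod_erase univ _ (mem_univ j),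
    Function.update_self, ← mul_assoc, Nat.mul_factorial_pred hj]
  congr 1
  exact prod_congr rfl fun i hi => by rw [Function.update_of_ne (ne_of_mem_erase hi)]

/-- Pascal's rule for multinomial coefficients: classify by the part the last item falls in. -/
lemma multinomial_eq_sum_multinomial_update {v : ι → ℕ} {n : ℕ} (hv : ∑ i, v i = n + 1) :
    Nat.multinomial univ v
      = ∑ j ∈ {j | v j ≠ 0}, Nat.multinomial univ (Function.update v j (v j - 1)) := by
  refine Nat.eq_of_mul_eq_mul_left (prod_pos fun i (_ : i ∈ univ) => Nat.factorial_pos (v i)) ?_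
  have hterm : ∀ j ∈ ({j | v j ≠ 0} : Finset ι),
      (∏ i, (v i)!) * Nat.multinomial univ (Function.update v j (v j - 1)) = v j * n ! := by
    intro j hj
    have hj : v j ≠ 0 := (mem_filter.1 hj).2
    have hsum : ∑ i, Function.update v j (v j - 1) i = n := by
      have := sum_update_add_apply v j (v j - 1)
      omega
    rw [prod_factorial_eq_mul_prod_factorial_update hj, mul_assoc, Nat.multinomial_spec, hsum]
  rw [Nat.multinomial_spec, mul_sum, sum_congr rfl hterm, ← sum_mul, sum_filter_ne_zero, hv,
    Nat.factorial_succ]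

end Multinomial

lemma sum_antidiagonalTuple_succ_multinomial_mul {S : Type*} [Semiring S] (c n : ℕ)
    (g : (Fin c → ℕ) → S) :
    ∑ v ∈ Nat.antidiagonalTuple c (n + 1), (Nat.multinomial univ v : S) * g v
      = ∑ j, ∑ w ∈ Nat.antidiagonalTuple c n,
          (Nat.multinomial univ w : S) * g (Function.update w j (w j + 1)) := by
  calc _ = ∑ v ∈ Nat.antidiagonalTuple c (n + 1), ∑ j ∈ {j | v j ≠ 0},
          (Nat.multinomial univ (Function.update v j (v j - 1)) : S) * g v :=
        sum_congr rfl fun v hv => by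
          rw [multinomial_eq_sum_multinomial_update (Nat.mem_antidiagonalTuple.1 hv),
            Nat.cast_sum, sum_mul]
    _ = ∑ j, ∑ v ∈ Nat.antidiagonalTuple c (n + 1) with v j ≠ 0,
          (Nat.multinomial univ (Function.update v j (v j - 1)) : S) * g v := by
        simp_rw [sum_filter]
        exact sum_comm
    _ = _ := by
      refine sum_congr rfl fun j _ => sum_nbij' (fun v => Function.update v j (v j - 1))
        (fun w => Function.update w j (w j + 1)) ?_ ?_ ?_ ?_ ?_
      · intro v hv
        rw [mem_filter, Nat.mem_antidiagonalTuple] at hv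
        have := sum_update_add_apply v j (v j - 1)
        rw [Nat.mem_antidiagonalTuple]
        omega
      · intro w hw
        rw [Nat.mem_antidiagonalTuple] at hw
        have := sum_update_add_apply w j (w j + 1)
        rw [mem_filter, Nat.mem_antidiagonalTuple, Function.update_self]
        omega
      · intro v hv
        have hvj : v j ≠ 0 := (mem_filter.1 hv).2
        simp [Nat.sub_add_cancel (Nat.pos_of_ne_zero hvj)]
      · intro w _
        simp
      · intro v hv
        have hvj : v j ≠ 0 := (mem_filter.1 hv).2
        simp [Nat.sub_add_cancel (Nat.pos_of_ne_zero hvj)]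

noncomputable def multinomialEulerianSum (c n : ℕ) : ℤ[X] :=
  ∑ v ∈ Nat.antidiagonalTuple c n, (Nat.multinomial univ v : ℤ[X]) * ∏ i, eulerianPoly (v i)

lemma multinomialEulerianSum_zero (c : ℕ) : multinomialEulerianSum c 0 = 1 := by
  simp [multinomialEulerianSum, Nat.antidiagonalTuple_zero_right, Nat.multinomial,
    eulerianPoly_zero]

lemma prod_eulerianPoly_update {c : ℕ} (w : Fin c → ℕ) (j : Fin c) (b : ℕ) :
    ∏ i, eulerianPoly (Function.update w j b i)
      = eulerianPoly b * ∏ i ∈ univ.erase j, eulerianPoly (w i) := by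
  rw [← sdiff_singleton_eq_erase, ← prod_update_of_mem (mem_univ j)]
  exact prod_congr rfl fun i _ => congrFun (Function.comp_update eulerianPoly w j b) i

lemma multinomialEulerianSum_succ (c n : ℕ) :
    multinomialEulerianSum c (n + 1) = eulerStep c n (multinomialEulerianSum c n) := by
  rw [multinomialEulerianSum, sum_antidiagonalTuple_succ_multinomial_mul, sum_comm,
    multinomialEulerianSum, eulerStep_sum]
  refine sum_congr rfl fun w hw => ?_
  have hleibniz := sum_eulerStep_mul_prod_erase univ w fun i => eulerianPoly (w i)
  rw [card_univ, Fintype.card_fin, Nat.mem_antidiagonalTuple.1 hw] at hleibniz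
  simp only [eulerStep_natCast_mul, ← mul_sum, ← hleibniz, prod_eulerianPoly_update,
    eulerianPoly_succ]

lemma lrminAscPoly_eq_multinomialEulerianSum (c n : ℕ) :
    lrminAscPoly c n = multinomialEulerianSum c n := by
  induction n with
  | zero => rw [lrminAscPoly_zero, multinomialEulerianSum_zero]
  | succ n ih => rw [lrminAscPoly_succ, multinomialEulerianSum_succ, ih]

lemma filter_piFinset_range_sum_eq_antidiagonalTuple (c n : ℕ) :
    (Fintype.piFinset fun _ : Fin c => range (n + 1)).filter (fun v => ∑ i, v i = n)
      = Nat.antidiagonalTuple c n := by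
  ext v
  simp only [mem_filter, Fintype.mem_piFinset, mem_range, Nat.mem_antidiagonalTuple,
    and_iff_right_iff_imp]
  intro h i
  exact Nat.lt_succ_of_le (h ▸ single_le_sum (fun _ _ => Nat.zero_le _) (mem_univ i))

theorem stmt_16_general (n q : ℕ) :
    ∑ π : Equiv.Perm (Fin n),
        (q : Polynomial ℤ) ^ lrminCount ⇑π * Polynomial.X ^ ascCount ⇑π
      = ∑ v ∈ (Fintype.piFinset fun _ : Fin q => Finset.range (n + 1)).filter
            (fun v => ∑ i, v i = n),
          (Nat.multinomial Finset.univ v : Polynomial ℤ) * ∏ i, eulerianPoly (v i) := by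
  rw [filter_piFinset_range_sum_eq_antidiagonalTuple]
  exact lrminAscPoly_eq_multinomialEulerianSum q n

/-- Σ_{π ∈ S_n} q^{lrmin(π)} x^{asc(π)} equals the sum over q-tuples of
nonnegative integers summing to n of the multinomial coefficient times the product of
the corresponding Eulerian polynomials. -/
theorem stmt_16 (n q : ℕ) (hn : 1 ≤ n) (hq : 1 ≤ q) :
    ∑ π : Equiv.Perm (Fin n),
        (q : Polynomial ℤ) ^ lrminCount ⇑π * Polynomial.X ^ ascCount ⇑π
      = ∑ v ∈ (Fintype.piFinset fun _ : Fin q => Finset.range (n + 1)).filter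
            (fun v => ∑ i, v i = n),
          (Nat.multinomial Finset.univ v : Polynomial ℤ) * ∏ i, eulerianPoly (v i) :=
  stmt_16_general n q
end
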